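/- arXiv:2305.03524 — 2 statements merged into one kernel-verified Lean document; each statement's English description precedes it below -/
import Mathlib

section
/- Let I_s > 0, V_T > 0, R > 0, and j ≥ 0. Then i = j + I_s − (V_T/R)·W₀((I_s·R/V_T)·exp((R/V_T)·(j + I_s))) is the unique real solution of the equation i·R = V_T·ln((j − i)/I_s + 1) with i < j + I_s, where W₀ denotes the principal branch of the Lambert W function. -/
/-- Principal branch of the Lambert W function on `[0, ∞)`:
for `x ≥ 0`, `W0 x` is the unique `y ≥ 0` with `y * exp y = x`. -/
noncomputable def W0 (x : ℝ) : ℝ :=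
  Function.invFunOn (fun y : ℝ => y * Real.exp y) (Set.Ici 0) x

/-! With `z := j + I_s - i > 0` the diode equation reads `log (z / I_s) = (R / V_T) (j + I_s - z)`,
i.e. `u e^u = (I_s R / V_T) e^{(R / V_T)(j + I_s)}` for `u := R z / V_T ≥ 0`. Since `y ↦ y e^y` is
strictly increasing on `[0, ∞)`, this holds exactly when `u` is the value of `W0` there. -/

open Real Set

theorem strictMonoOn_mul_exp : StrictMonoOn (fun y : ℝ => y * exp y) (Ici 0) :=
  fun a ha _ _ hab => mul_lt_mul hab (exp_lt_exp.mpr hab).le (exp_pos a) (ha.out.trans hab.le)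

theorem exists_mul_exp_eq {x : ℝ} (hx : 0 ≤ x) : ∃ y ∈ Ici (0 : ℝ), y * exp y = x := by
  have hx_le : x ≤ x * exp x := le_mul_of_one_le_right hx (one_le_exp hx)
  obtain ⟨y, hy, hyx⟩ := intermediate_value_Icc hx
    (continuous_id.mul continuous_exp).continuousOn ⟨by simpa using hx, hx_le⟩
  exact ⟨y, hy.1, hyx⟩

theorem W0_nonneg {x : ℝ} (hx : 0 ≤ x) : 0 ≤ W0 x :=
  Function.invFunOn_mem (exists_mul_exp_eq hx)

theorem W0_mul_exp_W0 {x : ℝ} (hx : 0 ≤ x) : W0 x * exp (W0 x) = x :=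
  Function.invFunOn_eq (exists_mul_exp_eq hx)

theorem W0_pos {x : ℝ} (hx : 0 < x) : 0 < W0 x := by
  refine (W0_nonneg hx.le).lt_of_ne fun h => hx.ne ?_
  rw [← W0_mul_exp_W0 hx.le, ← h, zero_mul]

theorem mul_exp_eq_iff_eq_W0 {x y : ℝ} (hx : 0 ≤ x) (hy : 0 ≤ y) :
    y * exp y = x ↔ y = W0 x := by
  constructor
  · rintro rfl
    exact strictMonoOn_mul_exp.injOn hy (W0_nonneg hx) (W0_mul_exp_W0 hx).symm
  · rintro rfl
    exact W0_mul_exp_W0 hx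

theorem log_eq_sub_mul_iff_mul_eq_W0 {b c z : ℝ} (hc : 0 < c) (hz : 0 < z) :
    log z = b - c * z ↔ c * z = W0 (c * exp b) := by
  rw [← mul_exp_eq_iff_eq_W0 (by positivity) (by positivity), mul_assoc,
    mul_right_inj' hc.ne', ← exp_log hz, ← exp_add, exp_log hz, exp_eq_exp, eq_sub_iff_add_eq]

theorem eh_current_closed_form_unique_general
    (Is VT R j : ℝ) (hIs : 0 < Is) (hVT : 0 < VT) (hR : 0 < R) :
    ∀ i : ℝ,
      (i < j + Is ∧ i * R = VT * Real.log ((j - i) / Is + 1)) ↔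
      i = j + Is - (VT / R) * W0 ((Is * R / VT) * Real.exp ((R / VT) * (j + Is))) := by
  intro i
  set W := W0 ((Is * R / VT) * Real.exp ((R / VT) * (j + Is)))
  have hW : 0 < W := W0_pos (by positivity)
  have hsolve : ∀ z > 0, log (z / Is) = (R / VT) * (j + Is) - Is * R / VT * (z / Is) ↔
      z = VT / R * W := fun z hz => by
    rw [log_eq_sub_mul_iff_mul_eq_W0 (by positivity) (by positivity),
      show Is * R / VT * (z / Is) = R / VT * z by field_simp]
    change R / VT * z = W ↔ _
    constructor <;> intro h
    · rw [← h]; field_simp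
    · rw [h]; field_simp
  have hlog : i * R = VT * log ((j - i) / Is + 1) ↔
      log ((j + Is - i) / Is) = (R / VT) * (j + Is) - Is * R / VT * ((j + Is - i) / Is) := by
    rw [show (j - i) / Is + 1 = (j + Is - i) / Is by field_simp; ring]
    constructor <;> intro h <;> field_simp at h ⊢ <;> linarith
  rw [hlog]
  constructor
  · rintro ⟨hi, h⟩
    linarith [(hsolve _ (by linarith)).1 h]
  · intro hi
    have hz : j + Is - i = VT / R * W := by linarith
    have hz_pos : 0 < j + Is - i := by rw [hz]; positivity
    exact ⟨by linarith, (hsolve _ hz_pos).2 hz⟩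

theorem eh_current_closed_form_unique
    (Is VT R j : ℝ) (hIs : 0 < Is) (hVT : 0 < VT) (hR : 0 < R) (hj : 0 ≤ j) :
    ∀ i : ℝ,
      (i < j + Is ∧ i * R = VT * Real.log ((j - i) / Is + 1)) ↔
      i = j + Is - (VT / R) * W0 ((Is * R / VT) * Real.exp ((R / VT) * (j + Is))) :=
  eh_current_closed_form_unique_general Is VT R j hIs hVT hR
end

section
/- Let I_s > 0, V_T > 0, R > 0, and j ≥ 0. Define i(j) = j + I_s − (V_T/R)·W₀((I_s·R/V_T)·exp((R/V_T)·(j + I_s))). Then 0 ≤ i(j) < j + I_s, and i(0) = 0. -/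
private lemma fW_strictMonoOn :
    StrictMonoOn (fun y : ℝ => y * Real.exp y) (Set.Ici 0) := by
  intro a ha b hb hab
  simp only [Set.mem_Ici] at ha hb
  calc a * Real.exp a ≤ a * Real.exp b := by
        exact mul_le_mul_of_nonneg_left (Real.exp_le_exp.mpr hab.le) ha
    _ < b * Real.exp b := by
        exact mul_lt_mul_of_pos_right hab (Real.exp_pos b)

private lemma fW_exists (x : ℝ) (hx : 0 ≤ x) :
    ∃ y ∈ Set.Ici (0:ℝ), y * Real.exp y = x := by
  have hcont : ContinuousOn (fun y : ℝ => y * Real.exp y) (Set.Icc 0 x) :=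
    (continuous_id.mul Real.continuous_exp).continuousOn
  have hmem : x ∈ Set.Icc ((0:ℝ) * Real.exp 0) (x * Real.exp x) := by
    constructor
    · simpa using hx
    · nlinarith [Real.one_le_exp hx]
  obtain ⟨y, hy, hyx⟩ := intermediate_value_Icc hx hcont hmem
  exact ⟨y, hy.1, hyx⟩

private lemma W0_mem (x : ℝ) (hx : 0 ≤ x) : 0 ≤ W0 x :=
  Function.invFunOn_mem (fW_exists x hx)

private lemma W0_spec (x : ℝ) (hx : 0 ≤ x) : W0 x * Real.exp (W0 x) = x :=
  Function.invFunOn_eq (fW_exists x hx)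

private lemma W0_eq (y : ℝ) (hy : 0 ≤ y) : W0 (y * Real.exp y) = y := by
  have hx : 0 ≤ y * Real.exp y := mul_nonneg hy (Real.exp_pos y).le
  exact fW_strictMonoOn.injOn (W0_mem _ hx) hy (W0_spec _ hx)

theorem eh_current_nonneg_bounded
    (Is VT R : ℝ) (hIs : 0 < Is) (hVT : 0 < VT) (hR : 0 < R)
    (i : ℝ → ℝ)
    (hi : ∀ j : ℝ, i j = j + Is - (VT / R) * W0 ((Is * R / VT) * Real.exp ((R / VT) * (j + Is)))) :
    (∀ j : ℝ, 0 ≤ j → 0 ≤ i j ∧ i j < j + Is) ∧ i 0 = 0 := by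
  constructor
  · intro j hj
    set x : ℝ := (Is * R / VT) * Real.exp ((R / VT) * (j + Is)) with hxdef
    have hxpos : 0 < x := by positivity
    set w : ℝ := W0 x with hwdef
    have hw0 : 0 ≤ w := W0_mem x hxpos.le
    have hweq : w * Real.exp w = x := W0_spec x hxpos.le
    have hwpos : 0 < w := by
      rcases hw0.lt_or_eq with h | h
      · exact h
      · exfalso; rw [← h] at hweq; simp at hweq; nlinarith
    set a : ℝ := (R / VT) * (j + Is) with hadef
    have ha0 : 0 ≤ a := by positivity
    have hle : w * Real.exp w ≤ a * Real.exp a := by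
      rw [hweq, hxdef]
      have hrpos : 0 ≤ R / VT := by positivity
      have : Is * R / VT ≤ a := by
        rw [hadef, mul_div_assoc]
        nlinarith
      exact mul_le_mul_of_nonneg_right this (Real.exp_pos _).le
    have hwa : w ≤ a := by
      by_contra h
      push_neg at h
      exact absurd (fW_strictMonoOn ha0 hw0 h) (not_lt.mpr hle)
    rw [hi j]
    constructor
    · have : (VT / R) * w ≤ (VT / R) * a := by
        exact mul_le_mul_of_nonneg_left hwa (by positivity)
      have haa : (VT / R) * a = j + Is := by
        rw [hadef]; field_simp
      linarith [haa ▸ this]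
    · nlinarith [mul_pos (div_pos hVT hR) hwpos]
  · rw [hi 0]
    have h1 : 0 ≤ R / VT * Is := by positivity
    have h2 : (Is * R / VT) * Real.exp ((R / VT) * (0 + Is)) =
        (R / VT * Is) * Real.exp (R / VT * Is) := by ring_nf
    rw [h2, W0_eq _ h1]
    field_simp
    ring
end
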